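/- arXiv:1409.4179 — 5 statements merged into one kernel-verified Lean document; each statement's English description precedes it below -/
import Mathlib

section
/- Let γ ≠ 0 and β be real constants. The function p(y) = γ/(γ²(y+β)² − 1) satisfies the ODE 4·p(y)⁴ − 2·p(y)·p''(y) + 3·(p'(y))² = 0 for all y in any interval where γ²(y+β)² − 1 ≠ 0. -/
/-!
Writing `u = y + β` and `D = γ²u² − 1`, the profile `p = γ / D` solves the Riccati equation
`p' = −2γu p²`. Differentiating once more gives `p'' = −2γp² − 4γu p p'`, and substituting both
into the left-hand side leaves `4p³(γ − D p)`, which vanishes because `D p = γ`.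
-/

open Filter Topology

noncomputable def solitonProfile (γ β y : ℝ) : ℝ := γ / (γ ^ 2 * (y + β) ^ 2 - 1)

section

variable {γ β y : ℝ}

theorem solitonProfile_mul_denom (h : γ ^ 2 * (y + β) ^ 2 - 1 ≠ 0) :
    (γ ^ 2 * (y + β) ^ 2 - 1) * solitonProfile γ β y = γ := by
  rw [solitonProfile, mul_div_cancel₀ _ h]

theorem hasDerivAt_solitonProfile (h : γ ^ 2 * (y + β) ^ 2 - 1 ≠ 0) :
    HasDerivAt (solitonProfile γ β) (-2 * γ * (y + β) * solitonProfile γ β y ^ 2) y := by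
  have hD : HasDerivAt (fun z => γ ^ 2 * (z + β) ^ 2 - 1) (γ ^ 2 * (2 * (y + β))) y := by
    simpa using ((((hasDerivAt_id y).add_const β).pow 2).const_mul (γ ^ 2)).sub_const 1
  refine ((hasDerivAt_const y γ).fun_div hD h).congr_deriv ?_
  rw [solitonProfile]
  field_simp
  ring

theorem deriv_solitonProfile_eventuallyEq (h : γ ^ 2 * (y + β) ^ 2 - 1 ≠ 0) :
    deriv (solitonProfile γ β) =ᶠ[𝓝 y]
      fun z => -2 * γ * (z + β) * solitonProfile γ β z ^ 2 := by
  have hopen : IsOpen {z : ℝ | γ ^ 2 * (z + β) ^ 2 - 1 ≠ 0} :=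
    isOpen_ne_fun (by fun_prop) continuous_const
  filter_upwards [hopen.mem_nhds h] with z hz
  exact (hasDerivAt_solitonProfile hz).deriv

theorem hasDerivAt_deriv_solitonProfile (h : γ ^ 2 * (y + β) ^ 2 - 1 ≠ 0) :
    HasDerivAt (deriv (solitonProfile γ β))
      (-2 * γ * solitonProfile γ β y ^ 2
        - 4 * γ * (y + β) * solitonProfile γ β y * deriv (solitonProfile γ β) y) y := by
  have hp := hasDerivAt_solitonProfile h
  have hR := (((hasDerivAt_id' y).add_const β).const_mul (-2 * γ)).fun_mul (hp.fun_pow 2)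
  refine (hR.congr_of_eventuallyEq (deriv_solitonProfile_eventuallyEq h)).congr_deriv ?_
  rw [hp.deriv]
  ring

end

theorem stmt_4_general (gam beta : ℝ) :
    ∀ y : ℝ, gam ^ 2 * (y + beta) ^ 2 - 1 ≠ 0 →
      4 * ((fun y => gam / (gam ^ 2 * (y + beta) ^ 2 - 1)) y) ^ 4
      - 2 * (fun y => gam / (gam ^ 2 * (y + beta) ^ 2 - 1)) y
          * deriv (deriv (fun y => gam / (gam ^ 2 * (y + beta) ^ 2 - 1))) y
      + 3 * (deriv (fun y => gam / (gam ^ 2 * (y + beta) ^ 2 - 1)) y) ^ 2 = 0 := by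
  intro y h
  change 4 * solitonProfile gam beta y ^ 4
      - 2 * solitonProfile gam beta y * deriv (deriv (solitonProfile gam beta)) y
      + 3 * deriv (solitonProfile gam beta) y ^ 2 = 0
  rw [(hasDerivAt_deriv_solitonProfile h).deriv, (hasDerivAt_solitonProfile h).deriv]
  linear_combination (-4 * solitonProfile gam beta y ^ 3) * solitonProfile_mul_denom h

/-- `p(y) = γ/(γ²(y+β)² − 1)` solves `4·p⁴ − 2·p·p'' + 3·(p')² = 0`
wherever `γ²(y+β)² − 1 ≠ 0`. -/
theorem stmt_4 (gam beta : ℝ) (hgam : gam ≠ 0) :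
    ∀ y : ℝ, gam ^ 2 * (y + beta) ^ 2 - 1 ≠ 0 →
      4 * ((fun y => gam / (gam ^ 2 * (y + beta) ^ 2 - 1)) y) ^ 4
      - 2 * (fun y => gam / (gam ^ 2 * (y + beta) ^ 2 - 1)) y
          * deriv (deriv (fun y => gam / (gam ^ 2 * (y + beta) ^ 2 - 1))) y
      + 3 * (deriv (fun y => gam / (gam ^ 2 * (y + beta) ^ 2 - 1)) y) ^ 2 = 0 :=
  stmt_4_general gam beta
end

section
/- Let α ≠ 0, β, γ, λ be real numbers. The function A(z) = β·(1+z²) + γ·z·√(1+z²) − λ·α²·z·√(1+z²)·arcsinh(z) satisfies the ODE −(1+z²)²·A''(z) + z·(1+z²)·A'(z) + 2·A(z) = 2λ·α²·(1+z²)² for all real z. -/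
/-!
Write `S = √(1 + z²)` and `u = z S`. Both `1 + z²` and `u` solve the homogeneous equation, and
since `arsinh' = 1 / S`, the function `(b - c arsinh z) u` has derivative
`(b - c arsinh z) u' - c z`: the `arsinh` terms of the equation cancel because `u` is a homogeneous
solution, and the terms coming from `- c z` produce `2c(1 + z²)²`. Writing every derivative of `S`
as a rational function of `z` times `S` (`S' = z S / (1 + z²)`) turns the remaining verification
into an identity of rational functions.
-/

open Real

theorem hasDerivAt_sqrt_one_add_sq (z : ℝ) :
    HasDerivAt (fun z => √(1 + z ^ 2)) (z * √(1 + z ^ 2) / (1 + z ^ 2)) z := by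
  have hpos : 0 < 1 + z ^ 2 := by positivity
  have hS : √(1 + z ^ 2) ≠ 0 := (sqrt_pos.2 hpos).ne'
  refine (((hasDerivAt_pow 2 z).const_add 1).sqrt hpos.ne').congr_deriv ?_
  field_simp
  rw [sq_sqrt hpos.le]
  ring

theorem hasDerivAt_mul_sqrt_one_add_sq (z : ℝ) :
    HasDerivAt (fun z => z * √(1 + z ^ 2))
      ((1 + 2 * z ^ 2) * √(1 + z ^ 2) / (1 + z ^ 2)) z := by
  refine ((hasDerivAt_id z).mul (hasDerivAt_sqrt_one_add_sq z)).congr_deriv ?_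
  simp only [id]
  field_simp
  ring

theorem hasDerivAt_deriv_mul_sqrt_one_add_sq (z : ℝ) :
    HasDerivAt (fun z => (1 + 2 * z ^ 2) * √(1 + z ^ 2) / (1 + z ^ 2))
      (z * (3 + 2 * z ^ 2) * √(1 + z ^ 2) / (1 + z ^ 2) ^ 2) z := by
  have hpos : 0 < 1 + z ^ 2 := by positivity
  have hnum : HasDerivAt (fun z : ℝ => 1 + 2 * z ^ 2) (4 * z) z :=
    (((hasDerivAt_pow 2 z).const_mul 2).const_add 1).congr_deriv
      (by simp only [Nat.cast_ofNat]; ring)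
  have hden : HasDerivAt (fun z : ℝ => 1 + z ^ 2) (2 * z) z :=
    ((hasDerivAt_pow 2 z).const_add 1).congr_deriv (by simp only [Nat.cast_ofNat]; ring)
  refine ((hnum.mul (hasDerivAt_sqrt_one_add_sq z)).div hden hpos.ne').congr_deriv ?_
  simp only [Pi.mul_apply]
  field_simp
  ring

theorem hasDerivAt_arsinh_mul_mul_sqrt_one_add_sq (b c z : ℝ) :
    HasDerivAt (fun z => b * z * √(1 + z ^ 2) - c * z * √(1 + z ^ 2) * arsinh z)
      ((b - c * arsinh z) * ((1 + 2 * z ^ 2) * √(1 + z ^ 2) / (1 + z ^ 2)) - c * z) z := by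
  have hS : √(1 + z ^ 2) ≠ 0 := by positivity
  have hf : (fun z => b * z * √(1 + z ^ 2) - c * z * √(1 + z ^ 2) * arsinh z)
      = fun z => (b - c * arsinh z) * (z * √(1 + z ^ 2)) := by
    ext z
    ring
  rw [hf]
  refine ((((hasDerivAt_arsinh z).const_mul c).const_sub b).mul
    (hasDerivAt_mul_sqrt_one_add_sq z)).congr_deriv ?_
  field_simp
  ring

theorem hasDerivAt_solution (a b c z : ℝ) :
    HasDerivAt
      (fun z => a * (1 + z ^ 2) + b * z * √(1 + z ^ 2) - c * z * √(1 + z ^ 2) * arsinh z)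
      (2 * a * z + (b - c * arsinh z) * ((1 + 2 * z ^ 2) * √(1 + z ^ 2) / (1 + z ^ 2))
        - c * z) z := by
  have hf : (fun z => a * (1 + z ^ 2) + b * z * √(1 + z ^ 2) - c * z * √(1 + z ^ 2) * arsinh z)
      = fun z => a * (1 + z ^ 2) + (b * z * √(1 + z ^ 2) - c * z * √(1 + z ^ 2) * arsinh z) := by
    ext z
    ring
  rw [hf]
  refine ((((hasDerivAt_pow 2 z).const_add 1).const_mul a).add
    (hasDerivAt_arsinh_mul_mul_sqrt_one_add_sq b c z)).congr_deriv ?_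
  simp only [Nat.cast_ofNat]
  ring

theorem hasDerivAt_deriv_solution (a b c z : ℝ) :
    HasDerivAt
      (fun z => 2 * a * z
        + (b - c * arsinh z) * ((1 + 2 * z ^ 2) * √(1 + z ^ 2) / (1 + z ^ 2)) - c * z)
      (2 * a + (b - c * arsinh z) * (z * (3 + 2 * z ^ 2) * √(1 + z ^ 2) / (1 + z ^ 2) ^ 2)
        - c * (1 + 2 * z ^ 2) / (1 + z ^ 2) - c) z := by
  have hS : √(1 + z ^ 2) ≠ 0 := by positivity
  refine ((((hasDerivAt_id z).const_mul (2 * a)).add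
    ((((hasDerivAt_arsinh z).const_mul c).const_sub b).mul
      (hasDerivAt_deriv_mul_sqrt_one_add_sq z))).sub
    ((hasDerivAt_id z).const_mul c)).congr_deriv ?_
  field_simp
  ring

theorem solution_satisfies_ode (a b c z : ℝ) :
    -(1 + z ^ 2) ^ 2 *
        deriv (deriv (fun z => a * (1 + z ^ 2) + b * z * √(1 + z ^ 2)
          - c * z * √(1 + z ^ 2) * arsinh z)) z
      + z * (1 + z ^ 2) *
        deriv (fun z => a * (1 + z ^ 2) + b * z * √(1 + z ^ 2)
          - c * z * √(1 + z ^ 2) * arsinh z) z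
      + 2 * (a * (1 + z ^ 2) + b * z * √(1 + z ^ 2) - c * z * √(1 + z ^ 2) * arsinh z)
      = 2 * c * (1 + z ^ 2) ^ 2 := by
  rw [funext fun x => (hasDerivAt_solution a b c x).deriv,
    (hasDerivAt_deriv_solution a b c z).deriv]
  field_simp
  ring

theorem stmt_8_general (alpha beta gam lam : ℝ) :
    ∀ z : ℝ,
      -(1 + z ^ 2) ^ 2 *
          deriv (deriv (fun z => beta * (1 + z ^ 2) + gam * z * Real.sqrt (1 + z ^ 2)
            - lam * alpha ^ 2 * z * Real.sqrt (1 + z ^ 2) * Real.arsinh z)) z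
      + z * (1 + z ^ 2) *
          deriv (fun z => beta * (1 + z ^ 2) + gam * z * Real.sqrt (1 + z ^ 2)
            - lam * alpha ^ 2 * z * Real.sqrt (1 + z ^ 2) * Real.arsinh z) z
      + 2 * (beta * (1 + z ^ 2) + gam * z * Real.sqrt (1 + z ^ 2)
            - lam * alpha ^ 2 * z * Real.sqrt (1 + z ^ 2) * Real.arsinh z)
      = 2 * lam * alpha ^ 2 * (1 + z ^ 2) ^ 2 := fun z =>
  (solution_satisfies_ode beta gam (lam * alpha ^ 2) z).trans (by ring)

/-- `A(z) = β(1+z²) + γz√(1+z²) − λα²z√(1+z²)·arcsinh z` solves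
`−(1+z²)²A'' + z(1+z²)A' + 2A = 2λα²(1+z²)²`. -/
theorem stmt_8 (alpha beta gam lam : ℝ) (ha : alpha ≠ 0) :
    ∀ z : ℝ,
      -(1 + z ^ 2) ^ 2 *
          deriv (deriv (fun z => beta * (1 + z ^ 2) + gam * z * Real.sqrt (1 + z ^ 2)
            - lam * alpha ^ 2 * z * Real.sqrt (1 + z ^ 2) * Real.arsinh z)) z
      + z * (1 + z ^ 2) *
          deriv (fun z => beta * (1 + z ^ 2) + gam * z * Real.sqrt (1 + z ^ 2)
            - lam * alpha ^ 2 * z * Real.sqrt (1 + z ^ 2) * Real.arsinh z) z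
      + 2 * (beta * (1 + z ^ 2) + gam * z * Real.sqrt (1 + z ^ 2)
            - lam * alpha ^ 2 * z * Real.sqrt (1 + z ^ 2) * Real.arsinh z)
      = 2 * lam * alpha ^ 2 * (1 + z ^ 2) ^ 2 :=
  stmt_8_general alpha beta gam lam
end

section
/- Let α ≠ 0, β, γ, λ be real numbers. On the interval (−1, 1), the function A(z) = β·(1−z²) + γ·z·√(1−z²) + λ·α²·z·√(1−z²)·arcsin(z) satisfies the ODE −(1−z²)²·A''(z) − z·(1−z²)·A'(z) − 2·A(z) = −2λ·α²·(1−z²)². -/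
/-!
Write `s = √(1 - z²)`, so that `A = β(1 - z²) + (γ + λα² arcsin z) · z s`. Both `1 - z²`
and `z s` solve the homogeneous equation, and because `arcsin' = 1 / s` the factor `arcsin z`
only contributes the forcing term `-2λα²(1 - z²)²`.
-/

open Real Filter Topology Set

theorem deriv_deriv_eq_of_eventually_hasDerivAt {𝕜 F : Type*} [NontriviallyNormedField 𝕜]
    [NormedAddCommGroup F] [NormedSpace 𝕜 F] {f f' : 𝕜 → F} {f'' : F} {x : 𝕜}
    (hf : ∀ᶠ y in 𝓝 x, HasDerivAt f (f' y) y) (hf' : HasDerivAt f' f'' x) :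
    deriv (deriv f) x = f'' := by
  rw [EventuallyEq.deriv_eq (hf.mono fun _ hy => hy.deriv)]
  exact hf'.deriv

section
variable {z : ℝ}

lemma one_sub_sq_pos_of_mem_Ioo (hz : z ∈ Ioo (-1) 1) : 0 < 1 - z ^ 2 := by
  nlinarith [hz.1, hz.2]

lemma sqrt_one_sub_sq_ne_zero (hz : z ∈ Ioo (-1) 1) : √(1 - z ^ 2) ≠ 0 :=
  (sqrt_pos.mpr (one_sub_sq_pos_of_mem_Ioo hz)).ne'

lemma sq_sqrt_one_sub_sq (hz : z ∈ Ioo (-1) 1) : √(1 - z ^ 2) ^ 2 = 1 - z ^ 2 :=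
  sq_sqrt (one_sub_sq_pos_of_mem_Ioo hz).le

lemma hasDerivAt_sqrt_one_sub_sq (hz : z ∈ Ioo (-1) 1) :
    HasDerivAt (fun x => √(1 - x ^ 2)) (-z / √(1 - z ^ 2)) z := by
  refine ((hasDerivAt_pow 2 z).const_sub 1).sqrt (one_sub_sq_pos_of_mem_Ioo hz).ne'
    |>.congr_deriv ?_
  field_simp [sqrt_one_sub_sq_ne_zero hz]
  ring

lemma hasDerivAt_mul_sqrt_one_sub_sq (hz : z ∈ Ioo (-1) 1) :
    HasDerivAt (fun x => x * √(1 - x ^ 2)) ((1 - 2 * z ^ 2) / √(1 - z ^ 2)) z := by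
  refine (hasDerivAt_id' z).mul (hasDerivAt_sqrt_one_sub_sq hz) |>.congr_deriv ?_
  field_simp [sqrt_one_sub_sq_ne_zero hz]
  rw [sq_sqrt_one_sub_sq hz]
  ring

lemma hasDerivAt_one_sub_two_sq_div_sqrt (hz : z ∈ Ioo (-1) 1) :
    HasDerivAt (fun x => (1 - 2 * x ^ 2) / √(1 - x ^ 2))
      (z * (2 * z ^ 2 - 3) / √(1 - z ^ 2) ^ 3) z := by
  refine (((hasDerivAt_pow 2 z).const_mul 2).const_sub 1).div (hasDerivAt_sqrt_one_sub_sq hz)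
    (sqrt_one_sub_sq_ne_zero hz) |>.congr_deriv ?_
  field_simp [sqrt_one_sub_sq_ne_zero hz]
  rw [sq_sqrt_one_sub_sq hz]
  ring

end

-- `c` stands for `λα²`.
noncomputable def solution (β γ c z : ℝ) : ℝ :=
  β * (1 - z ^ 2) + γ * z * √(1 - z ^ 2) + c * z * √(1 - z ^ 2) * arcsin z

noncomputable def solutionDeriv (β γ c z : ℝ) : ℝ :=
  -2 * β * z + (γ + c * arcsin z) * ((1 - 2 * z ^ 2) / √(1 - z ^ 2)) + c * z

noncomputable def solutionDeriv2 (β γ c z : ℝ) : ℝ :=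
  -2 * β + (γ + c * arcsin z) * (z * (2 * z ^ 2 - 3) / √(1 - z ^ 2) ^ 3)
    + c * ((1 - 2 * z ^ 2) / √(1 - z ^ 2) * (1 / √(1 - z ^ 2)) + 1)

section
variable {z : ℝ} (β γ c : ℝ)

lemma hasDerivAt_solution_s9 (hz : z ∈ Ioo (-1) 1) :
    HasDerivAt (solution β γ c) (solutionDeriv β γ c z) z := by
  have hK := (hasDerivAt_arcsin hz.1.ne' hz.2.ne).const_mul c |>.const_add γ
  have hsplit : solution β γ c =
      fun x => β * (1 - x ^ 2) + (γ + c * arcsin x) * (x * √(1 - x ^ 2)) := by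
    ext x; simp only [solution]; ring
  rw [hsplit]
  refine (((hasDerivAt_pow 2 z).const_sub 1).const_mul β).add
    (hK.mul (hasDerivAt_mul_sqrt_one_sub_sq hz)) |>.congr_deriv ?_
  simp only [solutionDeriv]
  field_simp [sqrt_one_sub_sq_ne_zero hz]
  ring

lemma hasDerivAt_solutionDeriv (hz : z ∈ Ioo (-1) 1) :
    HasDerivAt (solutionDeriv β γ c) (solutionDeriv2 β γ c z) z := by
  have hK := (hasDerivAt_arcsin hz.1.ne' hz.2.ne).const_mul c |>.const_add γ
  refine (((hasDerivAt_id' z).const_mul (-2 * β)).add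
    (hK.mul (hasDerivAt_one_sub_two_sq_div_sqrt hz))).add ((hasDerivAt_id' z).const_mul c)
    |>.congr_deriv ?_
  simp only [solutionDeriv2]
  ring

lemma deriv_deriv_solution (hz : z ∈ Ioo (-1) 1) :
    deriv (deriv (solution β γ c)) z = solutionDeriv2 β γ c z :=
  deriv_deriv_eq_of_eventually_hasDerivAt
    (eventually_of_mem (isOpen_Ioo.mem_nhds hz) fun _ hy => hasDerivAt_solution_s9 β γ c hy)
    (hasDerivAt_solutionDeriv β γ c hz)

lemma solution_ode (hz : z ∈ Ioo (-1) 1) :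
    -(1 - z ^ 2) ^ 2 * deriv (deriv (solution β γ c)) z
      - z * (1 - z ^ 2) * deriv (solution β γ c) z - 2 * solution β γ c z
      = -2 * c * (1 - z ^ 2) ^ 2 := by
  rw [deriv_deriv_solution β γ c hz, (hasDerivAt_solution_s9 β γ c hz).deriv]
  simp only [solution, solutionDeriv, solutionDeriv2]
  field_simp [sqrt_one_sub_sq_ne_zero hz]
  -- after clearing denominators only the relation `√(1 - z²)² = 1 - z²` is needed
  linear_combination (c * (1 - z ^ 2) * √(1 - z ^ 2) * (1 - 2 * z ^ 2)
    - z * (γ + c * arcsin z) * (2 * √(1 - z ^ 2) ^ 2 + (1 - z ^ 2) * (3 - 2 * z ^ 2)))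
    * sq_sqrt_one_sub_sq hz

end

theorem stmt_9_general (alpha beta gam lam : ℝ) :
    ∀ z : ℝ, -1 < z → z < 1 →
      -(1 - z ^ 2) ^ 2 *
          deriv (deriv (fun z => beta * (1 - z ^ 2) + gam * z * Real.sqrt (1 - z ^ 2)
            + lam * alpha ^ 2 * z * Real.sqrt (1 - z ^ 2) * Real.arcsin z)) z
      - z * (1 - z ^ 2) *
          deriv (fun z => beta * (1 - z ^ 2) + gam * z * Real.sqrt (1 - z ^ 2)
            + lam * alpha ^ 2 * z * Real.sqrt (1 - z ^ 2) * Real.arcsin z) z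
      - 2 * (beta * (1 - z ^ 2) + gam * z * Real.sqrt (1 - z ^ 2)
            + lam * alpha ^ 2 * z * Real.sqrt (1 - z ^ 2) * Real.arcsin z)
      = -2 * lam * alpha ^ 2 * (1 - z ^ 2) ^ 2 := fun z h1 h2 => by
  rw [mul_assoc (-2) lam]
  exact solution_ode beta gam (lam * alpha ^ 2) ⟨h1, h2⟩

/-- On `(−1,1)`, `A(z) = β(1−z²) + γz√(1−z²) + λα²z√(1−z²)·arcsin z` solves
`−(1−z²)²A'' − z(1−z²)A' − 2A = −2λα²(1−z²)²`. -/
theorem stmt_9 (alpha beta gam lam : ℝ) (ha : alpha ≠ 0) :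
    ∀ z : ℝ, -1 < z → z < 1 →
      -(1 - z ^ 2) ^ 2 *
          deriv (deriv (fun z => beta * (1 - z ^ 2) + gam * z * Real.sqrt (1 - z ^ 2)
            + lam * alpha ^ 2 * z * Real.sqrt (1 - z ^ 2) * Real.arcsin z)) z
      - z * (1 - z ^ 2) *
          deriv (fun z => beta * (1 - z ^ 2) + gam * z * Real.sqrt (1 - z ^ 2)
            + lam * alpha ^ 2 * z * Real.sqrt (1 - z ^ 2) * Real.arcsin z) z
      - 2 * (beta * (1 - z ^ 2) + gam * z * Real.sqrt (1 - z ^ 2)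
            + lam * alpha ^ 2 * z * Real.sqrt (1 - z ^ 2) * Real.arcsin z)
      = -2 * lam * alpha ^ 2 * (1 - z ^ 2) ^ 2 :=
  stmt_9_general alpha beta gam lam
end

section
/- Let a, b, c, d be real constants with c ≠ 0 and consider H(x, y) = (exp(c(y+d)) + 2a)/(c(b − ax)) on any open set where b − ax ≠ 0. Then H satisfies the PDE −H·H_yy + (H_y)² + 2·H_xy = 0, where subscripts denote partial derivatives. -/
open Real

lemma hasDerivAt_exp_mul_add (c d y : ℝ) :
    HasDerivAt (fun y => exp (c * (y + d))) (c * exp (c * (y + d))) y := by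
  simpa [mul_comm] using (((hasDerivAt_id y).add_const d).const_mul c).exp

lemma deriv_exp_mul_add_div (c d k y : ℝ) :
    deriv (fun y => exp (c * (y + d)) / k) y = c * exp (c * (y + d)) / k :=
  ((hasDerivAt_exp_mul_add c d y).div_const k).deriv

lemma deriv_exp_mul_add_add_div_mul {c : ℝ} (hc : c ≠ 0) (d e k : ℝ) :
    deriv (fun y => (exp (c * (y + d)) + e) / (c * k)) = fun y => exp (c * (y + d)) / k := by
  funext y
  rw [(((hasDerivAt_exp_mul_add c d y).add_const e).div_const (c * k)).deriv,
    mul_div_mul_left _ _ hc]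

lemma deriv_div_sub_mul (k a b x : ℝ) (hx : b - a * x ≠ 0) :
    deriv (fun x => k / (b - a * x)) x = a * k / (b - a * x) ^ 2 := by
  have hden : HasDerivAt (fun x => b - a * x) (-a) x := by
    simpa using ((hasDerivAt_id x).const_mul a).const_sub b
  rw [((hasDerivAt_const x k).fun_div hden hx).deriv]
  ring

/-- `H(x,y) = (exp(c(y+d)) + 2a)/(c(b − ax))` solves `−H·H_yy + (H_y)² + 2·H_xy = 0`
wherever `b − ax ≠ 0`. -/
theorem stmt_12 (a b c d : ℝ) (hc : c ≠ 0) :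
    ∀ x y : ℝ, b - a * x ≠ 0 →
      -((Real.exp (c * (y + d)) + 2 * a) / (c * (b - a * x))) *
          deriv (deriv (fun y => (Real.exp (c * (y + d)) + 2 * a) / (c * (b - a * x)))) y
      + (deriv (fun y => (Real.exp (c * (y + d)) + 2 * a) / (c * (b - a * x))) y) ^ 2
      + 2 * deriv (fun x =>
            deriv (fun y => (Real.exp (c * (y + d)) + 2 * a) / (c * (b - a * x))) y) x
      = 0 := by
  intro x y hx
  simp only [deriv_exp_mul_add_add_div_mul hc, deriv_exp_mul_add_div, deriv_div_sub_mul _ a b x hx]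
  -- With `E = exp (c * (y + d))`, `q = b - a * x`: `H_y = E/q`, `H_yy = cE/q`, `H_xy = aE/q²`,
  -- so the left side is `(-(E + 2a)E + E² + 2aE)/q² = 0`.
  field_simp
  ring
end

section
/- Let f be a twice differentiable real function and λ a real constant. On any region where f(x) ≠ 0, the function H(x,y) = (2λ·y + f(x))·(h(x) − 2y) + f'(x)/λ (with λ ≠ 0 and h an arbitrary differentiable function) satisfies the PDE −λ·H + 4λ²·y² + 4·f(x)·λ·y + f(x)² + λ·y·H_y + (f(x)/2)·H_y + f'(x) = 0. -/
/-- `H(x,y) = (2λy + f(x))·(h(x) − 2y) + f'(x)/λ` solves the `c1 = 1, c2 = 0` PDE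
`−λH + 4λ²y² + 4fλy + f² + λy·H_y + (f/2)·H_y + f' = 0` wherever `f(x) ≠ 0`. -/
theorem stmt_16 (lam : ℝ) (hlam : lam ≠ 0) (f h : ℝ → ℝ)
    (hf : Differentiable ℝ f) (hf2 : Differentiable ℝ (deriv f))
    (hh : Differentiable ℝ h) :
    ∀ x y : ℝ, f x ≠ 0 →
      -lam * ((2 * lam * y + f x) * (h x - 2 * y) + deriv f x / lam)
      + 4 * lam ^ 2 * y ^ 2 + 4 * f x * lam * y + (f x) ^ 2
      + lam * y * deriv (fun y => (2 * lam * y + f x) * (h x - 2 * y) + deriv f x / lam) y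
      + f x / 2 * deriv (fun y => (2 * lam * y + f x) * (h x - 2 * y) + deriv f x / lam) y
      + deriv f x = 0 := by
  intro x y hfx
  have hd : deriv (fun y => (2 * lam * y + f x) * (h x - 2 * y) + deriv f x / lam) y
      = 2 * lam * (h x - 2 * y) + (2 * lam * y + f x) * (-2) := by
    have : HasDerivAt (fun y : ℝ => (2 * lam * y + f x) * (h x - 2 * y) + deriv f x / lam)
        (2 * lam * (h x - 2 * y) + (2 * lam * y + f x) * (-2)) y := by
      have h1 : HasDerivAt (fun y : ℝ => 2 * lam * y + f x) (2 * lam) y := by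
        simpa using ((hasDerivAt_id y).const_mul (2 * lam)).add_const (f x)
      have h2 : HasDerivAt (fun y : ℝ => h x - 2 * y) (-2) y := by
        simpa using ((hasDerivAt_id y).const_mul (2 : ℝ)).const_sub (h x)
      exact (h1.mul h2).add_const (deriv f x / lam)
    exact this.deriv
  rw [hd]
  field_simp
  ring
end
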